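/- arXiv:2301.02483 — 6 statements merged into one kernel-verified Lean document; each statement's English description precedes it below -/
import Mathlib

section
/- Let λ ≠ 0 be a real number and let (T_s)_{s∈ℝ} and (g_t)_{t∈ℝ} be jointly measurable measure-preserving flows on a standard Borel probability space (X, μ) satisfying the dilation relation g_t ∘ T_s = T_{e^{λt}s} ∘ g_t for all s, t ∈ ℝ. If f ∈ L²(X, μ) satisfies f ∘ g_t = f μ-almost everywhere for every t ∈ ℝ, then f ∘ T_s = f μ-almost everywhere for every s ∈ ℝ. -/
open MeasureTheory Filter Set

/-!
Let `u` be the class of `f` in `L²` and `ψ s = ‖u ∘ T_s - u‖`. Composition with `g_t` is an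
isometry of `L²` fixing `u` and conjugating `T_s` to `T_{e^{λt} s}`, so `ψ (e^{λt} s) = ψ s`;
as `λ ≠ 0`, `ψ` is constant on `s ≠ 0`. Since `‖u ∘ T_s - u ∘ T_{s'}‖ = ψ (s - s')`, the orbit
`s ↦ u ∘ T_s` is then an uncountable family with all mutual distances equal, which in the
separable space `L²` forces that distance to be `0`.
-/

theorem Pairwise.eq_zero_of_dist_eq {E ι : Type*} [PseudoMetricSpace E]
    [TopologicalSpace.SeparableSpace E] [Uncountable ι] {F : ι → E} {r : ℝ}
    (h : Pairwise fun i j => dist (F i) (F j) = r) : r = 0 := by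
  by_contra hr
  obtain ⟨i, j, hij⟩ := exists_pair_ne ι
  have hr_pos : 0 < r := (h hij ▸ dist_nonneg).lt_of_ne' hr
  have hdisj : Pairwise (Function.onFun Disjoint fun i => Metric.ball (F i) (r / 2)) :=
    fun i j hij => Metric.ball_disjoint_ball (by rw [h hij, add_halves])
  exact not_countable <| hdisj.countable_of_isOpen_disjoint (fun _ => Metric.isOpen_ball)
    fun i => Metric.nonempty_ball.2 (half_pos hr_pos)

namespace MeasureTheory.Lp

variable {X E : Type*} [MeasurableSpace X] {μ : Measure X} [NormedAddCommGroup E]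
  {p : ENNReal}

theorem compMeasurePreserving_congr {Y : Type*} [MeasurableSpace Y] {ν : Measure Y}
    {S S' : X → Y} (h : S = S') (hS : MeasurePreserving S μ ν) (hS' : MeasurePreserving S' μ ν)
    (u : Lp E p ν) :
    compMeasurePreserving S hS u = compMeasurePreserving S' hS' u := by
  subst h; rfl

variable [Fact (1 ≤ p)]

theorem dist_compMeasurePreserving_of_semiconj {G S S' : X → X} (hG : MeasurePreserving G μ μ)
    (hS : MeasurePreserving S μ μ) (hS' : MeasurePreserving S' μ μ) (h : G ∘ S = S' ∘ G)
    {u : Lp E p μ} (hu : compMeasurePreserving G hG u = u) :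
    dist (compMeasurePreserving S' hS' u) u = dist (compMeasurePreserving S hS u) u := by
  calc dist (compMeasurePreserving S' hS' u) u
      = dist (compMeasurePreserving G hG (compMeasurePreserving S' hS' u))
          (compMeasurePreserving G hG u) := ((isometry_compMeasurePreserving hG).dist_eq _ _).symm
    _ = dist (compMeasurePreserving S hS (compMeasurePreserving G hG u)) u := by
        rw [← compMeasurePreserving_comp_apply, ← compMeasurePreserving_comp_apply, hu,
          compMeasurePreserving_congr h.symm]
    _ = dist (compMeasurePreserving S hS u) u := by rw [hu]

theorem dist_compMeasurePreserving_flow {T : ℝ → X → X} (hT : ∀ s, MeasurePreserving (T s) μ μ)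
    (hTadd : ∀ s s', T (s + s') = T s ∘ T s')
    (u : Lp E p μ) (s s' : ℝ) :
    dist (compMeasurePreserving (T s) (hT s) u) (compMeasurePreserving (T s') (hT s') u) =
      dist (compMeasurePreserving (T (s - s')) (hT _) u) u := by
  have hsplit : T s = T (s - s') ∘ T s' := by rw [← hTadd, sub_add_cancel]
  rw [compMeasurePreserving_congr hsplit _ ((hT _).comp (hT s')), compMeasurePreserving_comp_apply]
  exact (isometry_compMeasurePreserving (hT s')).dist_eq _ _

theorem compMeasurePreserving_flow_eq_of_dilation [TopologicalSpace.SeparableSpace (Lp E p μ)]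
    {lam : ℝ} (hlam : lam ≠ 0) {T g : ℝ → X → X}
    (hT : ∀ s, MeasurePreserving (T s) μ μ) (hT0 : T 0 = id)
    (hTadd : ∀ s s', T (s + s') = T s ∘ T s') (hg : ∀ t, MeasurePreserving (g t) μ μ)
    (hdil : ∀ t s, g t ∘ T s = T (Real.exp (lam * t) * s) ∘ g t)
    {u : Lp E p μ} (hu : ∀ t, compMeasurePreserving (g t) (hg t) u = u) (s : ℝ) :
    compMeasurePreserving (T s) (hT s) u = u := by
  set ψ : ℝ → ℝ := fun s => dist (compMeasurePreserving (T s) (hT s) u) u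
  have horbit_zero : compMeasurePreserving (T 0) (hT 0) u = u := by
    rw [compMeasurePreserving_congr hT0 _ (.id μ), compMeasurePreserving_id_apply]
  have hscale : ∀ c > 0, ∀ s, ψ (c * s) = ψ s := by
    intro c hc s
    have hexp : Real.exp (lam * (Real.log c / lam)) = c := by
      rw [mul_div_cancel₀ _ hlam, Real.exp_log hc]
    have := dist_compMeasurePreserving_of_semiconj (hg _) (hT s) (hT _)
      (hdil (Real.log c / lam) s) (hu _)
    rwa [hexp] at this
  have hneg : ∀ s, ψ (-s) = ψ s := by
    intro s
    have := dist_compMeasurePreserving_flow hT hTadd u 0 s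
    rwa [horbit_zero, zero_sub, dist_comm, eq_comm] at this
  have hconst : ∀ s ≠ 0, ψ s = ψ 1 := by
    intro s hs
    rcases hs.lt_or_gt with hs | hs
    · rw [← hneg, ← mul_one (-s), hscale _ (neg_pos.2 hs)]
    · rw [← mul_one s, hscale _ hs]
  have hψ_one : ψ 1 = 0 := Pairwise.eq_zero_of_dist_eq
    (F := fun s => compMeasurePreserving (T s) (hT s) u) fun s s' hss' =>
      (dist_compMeasurePreserving_flow hT hTadd u s s').trans (hconst _ (sub_ne_zero.2 hss'))
  rcases eq_or_ne s 0 with rfl | hs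
  · exact horbit_zero
  · exact dist_eq_zero.1 ((hconst s hs).trans hψ_one)

end MeasureTheory.Lp

theorem stmt3_general {X : Type*} [MeasurableSpace X] [StandardBorelSpace X]
    (μ : Measure X) [IsProbabilityMeasure μ]
    (lam : ℝ) (hlam : lam ≠ 0)
    (T g : ℝ → X → X)
    (hT0 : T 0 = id) (hTadd : ∀ s s' : ℝ, T (s + s') = T s ∘ T s')
    (hTmp : ∀ s : ℝ, MeasurePreserving (T s) μ μ)
    (hgmp : ∀ t : ℝ, MeasurePreserving (g t) μ μ)
    (hdil : ∀ t s : ℝ, g t ∘ T s = T (Real.exp (lam * t) * s) ∘ g t)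
    (f : X → ℝ) (hf : MemLp f 2 μ)
    (hfg : ∀ t : ℝ, (fun x => f (g t x)) =ᵐ[μ] f) :
    ∀ s : ℝ, (fun x => f (T s x)) =ᵐ[μ] f := by
  have : Fact ((1 : ENNReal) ≤ 2) := ⟨one_le_two⟩
  have : Fact ((2 : ENNReal) ≠ ⊤) := ⟨ENNReal.ofNat_ne_top⟩
  have hu : ∀ t, Lp.compMeasurePreserving (g t) (hgmp t) (hf.toLp f) = hf.toLp f := fun t =>
    (MemLp.toLp_eq_toLp_iff (hf.comp_measurePreserving (hgmp t)) hf).2 (hfg t)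
  exact fun s => (MemLp.toLp_eq_toLp_iff (hf.comp_measurePreserving (hTmp s)) hf).1 <|
    Lp.compMeasurePreserving_flow_eq_of_dilation hlam hTmp hT0 hTadd hgmp hdil hu s

theorem stmt3 {X : Type*} [MeasurableSpace X] [StandardBorelSpace X]
    (μ : Measure X) [IsProbabilityMeasure μ]
    (lam : ℝ) (hlam : lam ≠ 0)
    (T g : ℝ → X → X)
    (hTjm : Measurable (fun p : ℝ × X => T p.1 p.2))
    (hgjm : Measurable (fun p : ℝ × X => g p.1 p.2))
    (hT0 : T 0 = id) (hTadd : ∀ s s' : ℝ, T (s + s') = T s ∘ T s')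
    (hg0 : g 0 = id) (hgadd : ∀ t t' : ℝ, g (t + t') = g t ∘ g t')
    (hTmp : ∀ s : ℝ, MeasurePreserving (T s) μ μ)
    (hgmp : ∀ t : ℝ, MeasurePreserving (g t) μ μ)
    (hdil : ∀ t s : ℝ, g t ∘ T s = T (Real.exp (lam * t) * s) ∘ g t)
    (f : X → ℝ) (hf : MemLp f 2 μ)
    (hfg : ∀ t : ℝ, (fun x => f (g t x)) =ᵐ[μ] f) :
    ∀ s : ℝ, (fun x => f (T s x)) =ᵐ[μ] f :=
  stmt3_general μ lam hlam T g hT0 hTadd hTmp hgmp hdil f hf hfg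
end

section
/- Let λ ≠ 0 and let (g_t)_{t∈ℝ} and (R_w)_{w∈ℝ} be jointly measurable flows of Borel bijections of a standard Borel space X satisfying g_t ∘ R_w = R_{e^{λt}w} ∘ g_t for all t, w ∈ ℝ. Let θ be a Borel probability measure on X × X that is invariant under the diagonal flow D_t(x, y) = (g_t x, g_t y), under (x, y) ↦ (R_w x, y), and under (x, y) ↦ (x, R_w y), for all t, w ∈ ℝ. Let μ = (π₁)_*θ be the first marginal of θ, and assume: (i) μ is ergodic for the flow (g_t); (ii) there is a measurable family (θ_x)_{x∈X} of Borel probability measures on X with θ(A × B) = ∫_A θ_x(B) dμ(x) for all measurable A, B ⊆ X, such that for μ-a.e. x the measure θ_x is invariant and ergodic for the flow (R_w). Then θ is ergodic for the diagonal flow (D_t). -/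
/-!
Mautner phenomenon: `g_t` conjugates `R_w` to `R_{e^{λt} w}`, so for a `D`-invariant set `A`
the displacement `w ↦ θ(R_w⁻¹A Δ A)` (with `R_w` acting on the second factor) is constant on
`w ≠ 0`. It is then the common distance between any two members of the uncountable family
`(R_w⁻¹A)_w` in the separable measure algebra of `θ`, hence zero. By Fubini almost every fibre
`A_x` is then `R_w`-invariant for almost every `w`, hence for every `w`, so by fibrewise
ergodicity it has `θ_x`-measure `0` or `1`. Thus `A` agrees mod `θ` with `E × X` for
`E = {x | θ_x(A_x) = 1}`, which is `g`-invariant mod `μ`, and ergodicity of `μ` concludes.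
-/

open MeasureTheory Filter Set ProbabilityTheory
open scoped symmDiff ENNReal

def FlowErgodic {X : Type*} [MeasurableSpace X] (μ : Measure X) (T : ℝ → X → X) : Prop :=
  ∀ A : Set X, MeasurableSet A → (∀ s : ℝ, μ (symmDiff (T s ⁻¹' A) A) = 0) →
    μ A = 0 ∨ μ A = 1

section SeparableMeasure

variable {Y : Type*} [MeasurableSpace Y] {θ : Measure Y}

lemma exists_ne_measure_symmDiff_lt [IsFiniteMeasure θ] [IsSeparable θ] {ι : Type*}
    [Uncountable ι] {B : ι → Set Y} (hB : ∀ i, MeasurableSet (B i)) {ε : ℝ} (hε : 0 < ε) :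
    ∃ i j, i ≠ j ∧ θ (B i ∆ B j) < ENNReal.ofReal ε := by
  obtain ⟨𝒜, h𝒜, hdense⟩ := exists_countable_measureDense θ
  have := h𝒜.to_subtype
  have happrox i : ∃ t ∈ 𝒜, θ (B i ∆ t) < ENNReal.ofReal (ε / 2) :=
    hdense.approx _ (hB i) (measure_ne_top θ _) _ (half_pos hε)
  choose t ht hlt using happrox
  have hninj : ¬ (fun i => (⟨t i, ht i⟩ : 𝒜)).Injective := fun hinj =>
    not_countable hinj.countable
  obtain ⟨i, j, hij, hne⟩ := Function.not_injective_iff.1 hninj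
  have htij : t i = t j := congrArg Subtype.val hij
  refine ⟨i, j, hne, ?_⟩
  calc θ (B i ∆ B j) ≤ θ (B i ∆ t i) + θ (t j ∆ B j) := by
        rw [htij]; exact measure_symmDiff_le _ _ _
    _ < ENNReal.ofReal (ε / 2) + ENNReal.ofReal (ε / 2) := by
        rw [symmDiff_comm (t j)]; exact ENNReal.add_lt_add (hlt i) (hlt j)
    _ = ENNReal.ofReal ε := by
        rw [← ENNReal.ofReal_add (half_pos hε).le (half_pos hε).le, add_halves]

lemma preimage_ae_eq_of_conj_dilation [IsFiniteMeasure θ] [IsSeparable θ] {lam : ℝ}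
    (hlam : lam ≠ 0) {D S : ℝ → Y → Y} (hD : ∀ t, MeasurePreserving (D t) θ θ)
    (hS : ∀ w, MeasurePreserving (S w) θ θ) (hS0 : S 0 = id)
    (hSadd : ∀ w w', S (w + w') = S w ∘ S w')
    (hDS : ∀ t w, D t ∘ S w = S (Real.exp (lam * t) * w) ∘ D t)
    {A : Set Y} (hA : MeasurableSet A) (hAD : ∀ t, D t ⁻¹' A =ᵐ[θ] A) (w : ℝ) :
    S w ⁻¹' A =ᵐ[θ] A := by
  set f : ℝ → ℝ≥0∞ := fun w => θ ((S w ⁻¹' A) ∆ A)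
  have hSA w : MeasurableSet ((S w ⁻¹' A) ∆ A) := ((hS w).measurable hA).symmDiff hA
  have hdist w w' : θ ((S w ⁻¹' A) ∆ (S w' ⁻¹' A)) = f (w - w') := by
    conv_lhs => rw [← sub_add_cancel w w', hSadd, preimage_comp, ← preimage_symmDiff]
    exact (hS w').measure_preimage (hSA _).nullMeasurableSet
  have hscale t w : f (Real.exp (lam * t) * w) = f w := calc
    f (Real.exp (lam * t) * w) = θ (D t ⁻¹' ((S (Real.exp (lam * t) * w) ⁻¹' A) ∆ A)) :=
      ((hD t).measure_preimage (hSA _).nullMeasurableSet).symm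
    _ = θ ((S w ⁻¹' (D t ⁻¹' A)) ∆ (D t ⁻¹' A)) := by
      rw [preimage_symmDiff, ← preimage_comp, ← hDS, preimage_comp]
    _ = f w := measure_congr
      (((hS w).quasiMeasurePreserving.preimage_ae_eq (hAD t)).symmDiff (hAD t))
  have hneg w : f (-w) = f w := by
    rw [← zero_sub, ← hdist, hS0, preimage_id, symmDiff_comm]
  have hconst w (hw : w ≠ 0) : f w = f 1 := by
    wlog hpos : 0 < w generalizing w
    · rw [← hneg, this (-w) (neg_ne_zero.2 hw) (by linarith [hw.lt_or_gt.resolve_right hpos])]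
    have hexp : Real.exp (lam * (Real.log w / lam)) * 1 = w := by
      rw [mul_div_cancel₀ _ hlam, Real.exp_log hpos, mul_one]
    rw [← hexp, hscale]
  have hf1 : f 1 = 0 := by
    by_contra hne
    obtain ⟨u, u', hu, hlt⟩ := exists_ne_measure_symmDiff_lt (θ := θ)
      (fun u => (hS u).measurable hA) (ENNReal.toReal_pos hne (measure_ne_top θ _))
    rw [hdist, hconst _ (sub_ne_zero.2 hu), ENNReal.ofReal_toReal (measure_ne_top θ _)] at hlt
    exact hlt.false
  rw [← measure_symmDiff_eq_zero_iff]
  rcases eq_or_ne w 0 with rfl | hw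
  · simp [hS0]
  · exact (hconst w hw).trans hf1

end SeparableMeasure

lemma preimage_ae_eq_of_ae_preimage_ae_eq {G Y : Type*} [MeasurableSpace G] [AddGroup G]
    [MeasurableAdd G] [MeasurableNeg G] {ρ : Measure G} [ρ.IsAddLeftInvariant]
    [ρ.IsNegInvariant] [NeZero ρ] [MeasurableSpace Y] {ν : Measure Y} {R : G → Y → Y}
    (hR : ∀ w, Measure.QuasiMeasurePreserving (R w) ν ν)
    (hRadd : ∀ w w', R (w + w') = R w ∘ R w') {B : Set Y}
    (hB : ∀ᵐ w ∂ρ, R w ⁻¹' B =ᵐ[ν] B) (w : G) : R w ⁻¹' B =ᵐ[ν] B := by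
  obtain ⟨u, hu, hwu⟩ :=
    (hB.and ((ρ.measurePreserving_sub_left w).quasiMeasurePreserving.ae hB)).exists
  rw [← sub_add_cancel w u, hRadd, preimage_comp]
  exact ((hR u).preimage_ae_eq hwu).trans hu

section Kernel

variable {X Z : Type*} [MeasurableSpace X] [MeasurableSpace Z] {μ : Measure X} [SFinite μ]
  {κ : Kernel X Z} [IsSFiniteKernel κ]

lemma _root_.MeasureTheory.Measure.compProd_ae_eq_iff {s t : Set (X × Z)}
    (hs : MeasurableSet s) (ht : MeasurableSet t) :
    s =ᵐ[μ ⊗ₘ κ] t ↔ ∀ᵐ x ∂μ, Prod.mk x ⁻¹' s =ᵐ[κ x] Prod.mk x ⁻¹' t := by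
  simp_rw [← measure_symmDiff_eq_zero_iff]
  rw [Measure.compProd_apply (hs.symmDiff ht), lintegral_eq_zero_iff
    (Kernel.measurable_kernel_prodMk_left (hs.symmDiff ht))]
  rfl

lemma ae_ae_preimage_ae_eq_of_forall {T : Type*} [MeasurableSpace T] {ν : Measure T}
    [SFinite ν] {R : T → Z → Z} (hR : Measurable (fun p : T × Z => R p.1 p.2))
    {A : Set (X × Z)} (hA : MeasurableSet A)
    (h : ∀ w, ∀ᵐ x ∂μ, R w ⁻¹' (Prod.mk x ⁻¹' A) =ᵐ[κ x] Prod.mk x ⁻¹' A) :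
    ∀ᵐ x ∂μ, ∀ᵐ w ∂ν, R w ⁻¹' (Prod.mk x ⁻¹' A) =ᵐ[κ x] Prod.mk x ⁻¹' A := by
  set C : Set ((X × T) × Z) :=
    {q | (q.1.1, R q.1.2 q.2) ∈ A} ∆ {q | (q.1.1, q.2) ∈ A}
  have hC : MeasurableSet C :=
    (measurable_fst.fst.prodMk (hR.comp (measurable_fst.snd.prodMk measurable_snd)) hA).symmDiff
      (measurable_fst.fst.prodMk measurable_snd hA)
  refine (Measure.ae_ae_comm ?_).2 (ae_of_all _ h)
  simp_rw [← measure_symmDiff_eq_zero_iff]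
  exact (Kernel.measurable_kernel_prodMk_left (κ := κ.prodMkRight T) hC)
    (measurableSet_singleton 0)

lemma compProd_ae_eq_fst_preimage_of_zero_or_one [IsMarkovKernel κ] {A : Set (X × Z)}
    (hA : MeasurableSet A)
    (h01 : ∀ᵐ x ∂μ, κ x (Prod.mk x ⁻¹' A) = 0 ∨ κ x (Prod.mk x ⁻¹' A) = 1) :
    A =ᵐ[μ ⊗ₘ κ] Prod.fst ⁻¹' {x | κ x (Prod.mk x ⁻¹' A) = 1} := by
  have hE : MeasurableSet {x | κ x (Prod.mk x ⁻¹' A) = 1} :=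
    Kernel.measurable_kernel_prodMk_left hA (measurableSet_singleton 1)
  rw [Measure.compProd_ae_eq_iff hA (measurable_fst hE)]
  filter_upwards [h01] with x hx
  rcases hx with h0 | h1
  · simp [h0, ae_eq_empty]
  · simp [h1, ae_eq_univ, prob_compl_eq_zero_iff (measurable_prodMk_left hA)]

lemma compProd_ae_eq_fst_preimage_of_invariant [IsMarkovKernel κ] {R : ℝ → Z → Z}
    (hR : Measurable (fun p : ℝ × Z => R p.1 p.2)) (hRadd : ∀ w w', R (w + w') = R w ∘ R w')
    (herg : ∀ᵐ x ∂μ, (∀ w, MeasurePreserving (R w) (κ x) (κ x)) ∧ FlowErgodic (κ x) R)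
    {A : Set (X × Z)} (hA : MeasurableSet A)
    (hAR : ∀ w, (fun p : X × Z => (p.1, R w p.2)) ⁻¹' A =ᵐ[μ ⊗ₘ κ] A) :
    A =ᵐ[μ ⊗ₘ κ] Prod.fst ⁻¹' {x | κ x (Prod.mk x ⁻¹' A) = 1} := by
  have hae : ∀ᵐ x ∂μ, ∀ᵐ w ∂(volume : Measure ℝ),
      R w ⁻¹' (Prod.mk x ⁻¹' A) =ᵐ[κ x] Prod.mk x ⁻¹' A :=
    ae_ae_preimage_ae_eq_of_forall hR hA fun w =>
      (Measure.compProd_ae_eq_iff (measurable_fst.prodMk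
        (hR.comp (measurable_const.prodMk measurable_snd)) hA) hA).1 (hAR w)
  refine compProd_ae_eq_fst_preimage_of_zero_or_one hA ?_
  filter_upwards [hae, herg] with x hx hxerg
  refine hxerg.2 _ (measurable_prodMk_left hA) fun w => measure_symmDiff_eq_zero_iff.2 ?_
  exact preimage_ae_eq_of_ae_preimage_ae_eq (fun w => (hxerg.1 w).quasiMeasurePreserving)
    hRadd hx w

end Kernel

theorem stmt4_general {X : Type*} [MeasurableSpace X] [StandardBorelSpace X]
    (lam : ℝ) (hlam : lam ≠ 0)
    (g R : ℝ → X → X)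
    (hgjm : Measurable (fun p : ℝ × X => g p.1 p.2))
    (hRjm : Measurable (fun p : ℝ × X => R p.1 p.2))
    (hR0 : R 0 = id) (hRadd : ∀ w w' : ℝ, R (w + w') = R w ∘ R w')
    (hdil : ∀ t w : ℝ, g t ∘ R w = R (Real.exp (lam * t) * w) ∘ g t)
    (θ : Measure (X × X)) [IsProbabilityMeasure θ]
    (hθD : ∀ t : ℝ, MeasurePreserving (fun p : X × X => (g t p.1, g t p.2)) θ θ)
    (hθR2 : ∀ w : ℝ, MeasurePreserving (fun p : X × X => (p.1, R w p.2)) θ θ)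
    (μ : Measure X) (hμ : μ = θ.map Prod.fst)
    (hμerg : FlowErgodic μ g)
    (θx : X → Measure X)
    (hθxprob : ∀ x, IsProbabilityMeasure (θx x))
    (hθxmeas : ∀ B : Set X, MeasurableSet B → Measurable (fun x => θx x B))
    (hdisint : ∀ A B : Set X, MeasurableSet A → MeasurableSet B →
      θ (A ×ˢ B) = ∫⁻ x in A, θx x B ∂μ)
    (hfib : ∀ᵐ x ∂μ, (∀ w : ℝ, MeasurePreserving (R w) (θx x) (θx x)) ∧
      FlowErgodic (θx x) R) :
    FlowErgodic θ (fun t (p : X × X) => (g t p.1, g t p.2)) := by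
  subst hμ
  let κ : Kernel X X := ⟨θx, Measure.measurable_of_measurable_coe _ hθxmeas⟩
  have : IsMarkovKernel κ := ⟨hθxprob⟩
  have hθ : θ = θ.map Prod.fst ⊗ₘ κ := Measure.ext_prod fun hs ht => by
    rw [hdisint _ _ hs ht, Measure.compProd_apply_prod hs ht]; rfl
  intro A hA hAD
  have hAR w : (fun p : X × X => (p.1, R w p.2)) ⁻¹' A =ᵐ[θ] A :=
    preimage_ae_eq_of_conj_dilation hlam hθD hθR2 (by rw [hR0]; rfl)
      (fun w w' => by rw [hRadd]; rfl)
      (fun t w => funext fun p => Prod.ext rfl (congrFun (hdil t w) p.2)) hA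
      (fun t => measure_symmDiff_eq_zero_iff.1 (hAD t)) w
  set E := {x | κ x (Prod.mk x ⁻¹' A) = 1}
  have hE : MeasurableSet E :=
    Kernel.measurable_kernel_prodMk_left hA (measurableSet_singleton 1)
  have hAE : A =ᵐ[θ] Prod.fst ⁻¹' E :=
    hθ ▸ compProd_ae_eq_fst_preimage_of_invariant hRjm hRadd hfib hA (hθ ▸ hAR)
  have hEg t : θ.map Prod.fst ((g t ⁻¹' E) ∆ E) = 0 := by
    have hgt : Measurable (g t) := hgjm.comp measurable_prodMk_left
    rw [Measure.map_apply measurable_fst ((hgt hE).symmDiff hE), preimage_symmDiff,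
      measure_symmDiff_eq_zero_iff]
    exact ((hθD t).quasiMeasurePreserving.preimage_ae_eq hAE.symm).trans
      ((measure_symmDiff_eq_zero_iff.1 (hAD t)).trans hAE)
  rw [measure_congr hAE, ← Measure.map_apply measurable_fst hE]
  exact hμerg E hE hEg

theorem stmt4 {X : Type*} [MeasurableSpace X] [StandardBorelSpace X]
    (lam : ℝ) (hlam : lam ≠ 0)
    (g R : ℝ → X → X)
    (hgjm : Measurable (fun p : ℝ × X => g p.1 p.2))
    (hRjm : Measurable (fun p : ℝ × X => R p.1 p.2))
    (hg0 : g 0 = id) (hgadd : ∀ t t' : ℝ, g (t + t') = g t ∘ g t')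
    (hR0 : R 0 = id) (hRadd : ∀ w w' : ℝ, R (w + w') = R w ∘ R w')
    (hdil : ∀ t w : ℝ, g t ∘ R w = R (Real.exp (lam * t) * w) ∘ g t)
    (θ : Measure (X × X)) [IsProbabilityMeasure θ]
    (hθD : ∀ t : ℝ, MeasurePreserving (fun p : X × X => (g t p.1, g t p.2)) θ θ)
    (hθR1 : ∀ w : ℝ, MeasurePreserving (fun p : X × X => (R w p.1, p.2)) θ θ)
    (hθR2 : ∀ w : ℝ, MeasurePreserving (fun p : X × X => (p.1, R w p.2)) θ θ)
    (μ : Measure X) (hμ : μ = θ.map Prod.fst)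
    (hμerg : FlowErgodic μ g)
    (θx : X → Measure X)
    (hθxprob : ∀ x, IsProbabilityMeasure (θx x))
    (hθxmeas : ∀ B : Set X, MeasurableSet B → Measurable (fun x => θx x B))
    (hdisint : ∀ A B : Set X, MeasurableSet A → MeasurableSet B →
      θ (A ×ˢ B) = ∫⁻ x in A, θx x B ∂μ)
    (hfib : ∀ᵐ x ∂μ, (∀ w : ℝ, MeasurePreserving (R w) (θx x) (θx x)) ∧
      FlowErgodic (θx x) R) :
    FlowErgodic θ (fun t (p : X × X) => (g t p.1, g t p.2)) :=
  stmt4_general lam hlam g R hgjm hRjm hR0 hRadd hdil θ hθD hθR2 μ hμ hμerg θx hθxprob hθxmeas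
    hdisint hfib
end

section
/- Let (X, μ) be a standard Borel probability space and let G be a group acting on X by measurable, measure-preserving bijections. Let Y be a standard Borel space, π : X → Y a measurable map with π(g·x) = π(x) for all g ∈ G and x ∈ X, let ν = π_*μ, and let (κ_y)_{y∈Y} be a disintegration of μ over π such that for ν-a.e. y the measure κ_y is G-invariant and G-ergodic. Then the G-action on (X, μ) is ergodic if and only if the relatively independent self-joining θ of μ over π equals the product measure μ × μ. -/
open MeasureTheory Filter Set ProbabilityTheory
open scoped ENNReal

/-!
Writing `μ = ∫ κ_y dν`, the self-joining `θ` equals `μ × μ` exactly when `κ_y = μ` for `ν`-a.e.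
`y`. One direction is immediate; conversely `θ (A × A) = μ(A)²` says that `y ↦ κ_y(A)` has
variance zero, hence is a.e. constant, and since `X` is countably generated this upgrades to
`κ_y = μ` a.e. If the action is ergodic, the `G`-invariance of `π` makes `ν` take only the values
`0` and `1`, which again forces every `y ↦ κ_y(A)` to be a.e. constant. Conversely, if `κ_y = μ`
for some `y` at which `κ_y` is ergodic, then `μ` is ergodic.
-/

section

variable {X Y : Type*} [MeasurableSpace X] [MeasurableSpace Y] {ν : Measure Y}

lemma exists_ae_eq_const_of_forall_measure_eq_zero_or_one {Z : Type*} [MeasurableSpace Z]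
    [Nonempty Z] [MeasurableSpace.CountablySeparated Z] [IsProbabilityMeasure ν]
    (h01 : ∀ B, MeasurableSet B → ν B = 0 ∨ ν B = 1) {f : Y → Z} (hf : Measurable f) :
    ∃ c, f =ᵐ[ν] fun _ => c :=
  exists_eventuallyEq_const_of_forall_separating MeasurableSet fun U hU =>
    (h01 _ (hf hU)).symm.imp
      (fun h1 => (ae_mem_iff_measure_eq (hf hU).nullMeasurableSet).2 (by rw [h1, measure_univ]))
      measure_eq_zero_iff_ae_notMem.1

lemma ae_eq_lintegral_of_lintegral_sq_eq [IsProbabilityMeasure ν] {f : Y → ℝ≥0∞}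
    (hf : AEMeasurable f ν) (hf_int : ∫⁻ y, f y ∂ν ≠ ∞)
    (hsq : ∫⁻ y, f y ^ 2 ∂ν = (∫⁻ y, f y ∂ν) ^ 2) :
    f =ᵐ[ν] fun _ => ∫⁻ y, f y ∂ν := by
  have hf_fin : ∀ᵐ y ∂ν, f y < ∞ := ae_lt_top' hf hf_int
  have hmean : ∫ y, (f y).toReal ∂ν = (∫⁻ y, f y ∂ν).toReal := integral_toReal hf hf_fin
  have hvar : eVar[fun y => (f y).toReal; ν] = 0 := by
    rw [evariance_def' hf.ennreal_toReal.aestronglyMeasurable, hmean, ← ENNReal.toReal_pow,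
      ENNReal.ofReal_toReal (by finiteness), ← hsq, tsub_eq_zero_iff_le]
    refine (lintegral_congr_ae ?_).le
    filter_upwards [hf_fin] with y hy
    simp [hy.ne]
  filter_upwards [(evariance_eq_zero_iff hf.ennreal_toReal).1 hvar, hf_fin] with y hy hy_fin
  rwa [hmean, ENNReal.toReal_eq_toReal_iff' hy_fin.ne hf_int] at hy

namespace ProbabilityTheory.Kernel

variable [MeasurableSpace.CountableOrCountablyGenerated Y X] {κ : Kernel Y X}

lemma ae_eq_const_of_forall_ae_apply_eq [IsFiniteMeasure ν] [IsFiniteKernel κ] {μ : Measure X}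
    [IsFiniteMeasure μ] (h : ∀ s, MeasurableSet s → ∀ᵐ y ∂ν, κ y s = μ s) :
    ∀ᵐ y ∂ν, κ y = μ := by
  have hcomp : ν ⊗ₘ κ = ν ⊗ₘ Kernel.const Y μ := by
    rw [Measure.compProd_const]
    refine (Measure.prod_eq fun s t hs ht => ?_).symm
    rw [Measure.compProd_apply_prod hs ht, lintegral_congr_ae (ae_restrict_of_ae (h t ht)),
      MeasureTheory.setLIntegral_const, mul_comm]
  filter_upwards [Kernel.ae_eq_of_compProd_eq hcomp] with y hy using hy

lemma ae_eq_comp_of_forall_measure_eq_zero_or_one [IsProbabilityMeasure ν] [IsFiniteKernel κ]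
    (h01 : ∀ B, MeasurableSet B → ν B = 0 ∨ ν B = 1) :
    ∀ᵐ y ∂ν, κ y = κ ∘ₘ ν := by
  refine ae_eq_const_of_forall_ae_apply_eq fun s hs => ?_
  obtain ⟨c, hc⟩ := exists_ae_eq_const_of_forall_measure_eq_zero_or_one h01 (κ.measurable_coe hs)
  rwa [Measure.bind_apply hs κ.aemeasurable, lintegral_congr_ae hc, MeasureTheory.lintegral_const,
    measure_univ, mul_one]

lemma prod_self_comp_eq_prod_iff [IsProbabilityMeasure ν] [IsMarkovKernel κ] :
    (κ ×ₖ κ) ∘ₘ ν = (κ ∘ₘ ν).prod (κ ∘ₘ ν) ↔ ∀ᵐ y ∂ν, κ y = κ ∘ₘ ν := by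
  constructor
  · intro hprod
    refine ae_eq_const_of_forall_ae_apply_eq fun s hs => ?_
    have hmean : ∫⁻ y, κ y s ∂ν = (κ ∘ₘ ν) s := (Measure.bind_apply hs κ.aemeasurable).symm
    have hsq : ∫⁻ y, κ y s ^ 2 ∂ν = (∫⁻ y, κ y s ∂ν) ^ 2 := by
      simp_rw [sq, ← Measure.prod_prod, ← Kernel.prod_apply, hmean,
        ← Measure.bind_apply (hs.prod hs) (κ ×ₖ κ).aemeasurable, hprod, Measure.prod_prod]
    rw [← hmean]
    exact ae_eq_lintegral_of_lintegral_sq_eq (κ.measurable_coe hs).aemeasurable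
      (by rw [hmean]; finiteness) hsq
  · intro h
    rw [Measure.comp_congr (η := Kernel.const Y ((κ ∘ₘ ν).prod (κ ∘ₘ ν))) ?_, Measure.const_comp,
      measure_univ, one_smul]
    filter_upwards [h] with y hy
    rw [Kernel.prod_apply, Kernel.const_apply, hy]

end ProbabilityTheory.Kernel

end

theorem stmt5_general {X Y G : Type*} [MeasurableSpace X] [StandardBorelSpace X]
    [MeasurableSpace Y]
    (μ : Measure X) [IsProbabilityMeasure μ]
    -- the action of `G` on `X` by measurable measure-preserving bijections
    (a : G → X → X)
    -- the `G`-invariant factor map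
    (π : X → Y) (hπ : Measurable π) (hπinv : ∀ (g : G) (x : X), π (a g x) = π x)
    (ν : Measure Y) (hν : ν = μ.map π)
    -- the disintegration of `μ` over `π`
    (κ : Y → Measure X) (hκprob : ∀ y, IsProbabilityMeasure (κ y))
    (hκmeas : ∀ A : Set X, MeasurableSet A → Measurable (fun y => κ y A))
    (hκdis : ∀ A : Set X, MeasurableSet A → μ A = ∫⁻ y, κ y A ∂ν)
    -- a.e. fiber measure is `G`-invariant and `G`-ergodic
    (hκerg : ∀ᵐ y ∂ν, (∀ g : G, MeasurePreserving (a g) (κ y) (κ y)) ∧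
      (∀ A : Set X, MeasurableSet A → (∀ g : G, κ y (symmDiff (a g ⁻¹' A) A) = 0) →
        κ y A = 0 ∨ κ y A = 1))
    -- the relatively independent self-joining of `μ` over `π`
    (θ : Measure (X × X))
    (hθ : ∀ C : Set (X × X), MeasurableSet C → θ C = ∫⁻ y, ((κ y).prod (κ y)) C ∂ν) :
    ((∀ A : Set X, MeasurableSet A → (∀ g : G, μ (symmDiff (a g ⁻¹' A) A) = 0) →
        μ A = 0 ∨ μ A = 1) ↔ θ = μ.prod μ) := by
  have : IsProbabilityMeasure ν := hν ▸ Measure.isProbabilityMeasure_map hπ.aemeasurable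
  let K : Kernel Y X := ⟨κ, Measure.measurable_of_measurable_coe κ hκmeas⟩
  have : IsMarkovKernel K := ⟨hκprob⟩
  have hμ : K ∘ₘ ν = μ := Measure.ext fun A hA => by
    rw [Measure.bind_apply hA K.aemeasurable, hκdis A hA]; rfl
  have hθK : θ = (K ×ₖ K) ∘ₘ ν := Measure.ext fun C hC => by
    simp_rw [hθ C hC, Measure.bind_apply hC (K ×ₖ K).aemeasurable, Kernel.prod_apply]; rfl
  have hjoin : θ = μ.prod μ ↔ ∀ᵐ y ∂ν, K y = μ := by
    rw [hθK, ← hμ]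
    exact Kernel.prod_self_comp_eq_prod_iff
  rw [hjoin]
  constructor
  · intro herg
    refine hμ ▸ Kernel.ae_eq_comp_of_forall_measure_eq_zero_or_one fun B hB => ?_
    have hB_inv : ∀ g, a g ⁻¹' (π ⁻¹' B) = π ⁻¹' B := fun g => by ext x; simp [hπinv]
    rw [hν, Measure.map_apply hπ hB]
    exact herg _ (hπ hB) fun g => by simp [hB_inv]
  · intro hKμ A hA hA_inv
    obtain ⟨y, hy, -, hy_erg⟩ := (hKμ.and hκerg).exists
    change κ y = μ at hy
    rw [← hy] at hA_inv ⊢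
    exact hy_erg A hA hA_inv

theorem stmt5 {X Y G : Type*} [MeasurableSpace X] [StandardBorelSpace X]
    [MeasurableSpace Y] [StandardBorelSpace Y] [Group G]
    (μ : Measure X) [IsProbabilityMeasure μ]
    -- the action of `G` on `X` by measurable measure-preserving bijections
    (a : G → X → X) (ha1 : a 1 = id) (hamul : ∀ g h : G, a (g * h) = a g ∘ a h)
    (hameas : ∀ g : G, Measurable (a g))
    (hamp : ∀ g : G, MeasurePreserving (a g) μ μ)
    -- the `G`-invariant factor map
    (π : X → Y) (hπ : Measurable π) (hπinv : ∀ (g : G) (x : X), π (a g x) = π x)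
    (ν : Measure Y) (hν : ν = μ.map π)
    -- the disintegration of `μ` over `π`
    (κ : Y → Measure X) (hκprob : ∀ y, IsProbabilityMeasure (κ y))
    (hκmeas : ∀ A : Set X, MeasurableSet A → Measurable (fun y => κ y A))
    (hκdis : ∀ A : Set X, MeasurableSet A → μ A = ∫⁻ y, κ y A ∂ν)
    (hκfib : ∀ᵐ y ∂ν, κ y (π ⁻¹' {y}) = 1)
    -- a.e. fiber measure is `G`-invariant and `G`-ergodic
    (hκerg : ∀ᵐ y ∂ν, (∀ g : G, MeasurePreserving (a g) (κ y) (κ y)) ∧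
      (∀ A : Set X, MeasurableSet A → (∀ g : G, κ y (symmDiff (a g ⁻¹' A) A) = 0) →
        κ y A = 0 ∨ κ y A = 1))
    -- the relatively independent self-joining of `μ` over `π`
    (θ : Measure (X × X))
    (hθ : ∀ C : Set (X × X), MeasurableSet C → θ C = ∫⁻ y, ((κ y).prod (κ y)) C ∂ν) :
    ((∀ A : Set X, MeasurableSet A → (∀ g : G, μ (symmDiff (a g ⁻¹' A) A) = 0) →
        μ A = 0 ∨ μ A = 1) ↔ θ = μ.prod μ) :=
  stmt5_general μ a π hπ hπinv ν hν κ hκprob hκmeas hκdis hκerg θ hθ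
end

section
/- Let X be a Polish space with its Borel σ-algebra, μ a Borel probability measure on X, Y a standard Borel space, T : X → Y a measurable map, ν = T_*μ, and (κ_y)_{y∈Y} a disintegration of μ over T (i.e. a measurable family of Borel probability measures on X with μ(A) = ∫_Y κ_y(A) dν(y) for all measurable A and κ_y(T⁻¹{y}) = 1 for ν-a.e. y). Then for μ-almost every x ∈ X, the point x belongs to the topological support of the measure κ_{T(x)}. -/
open MeasureTheory Filter Set

/-- The topological support of a Borel measure: the set of points all of whose open
neighborhoods have positive measure. This is the smallest closed set of full measure
(when the latter exists, e.g. on Polish spaces). -/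
def measureSupport {X : Type*} [TopologicalSpace X] [MeasurableSpace X]
    (ρ : Measure X) : Set X :=
  {x | ∀ U : Set X, IsOpen U → x ∈ U → 0 < ρ U}

/-!
If `x` misses the support of `κ (T x)`, some basic open set `U ∋ x` has `κ (T x) U = 0`.
For a fixed measurable `A`, the set of `x ∈ A` with `κ (T x) A = 0` is `μ`-null: integrating
its `κ y`-measure against `ν`, for `y` with `κ y A = 0` it lies inside `A`, and otherwise it
misses the fiber `T ⁻¹' {y}` which carries `κ y`. A countable basis finishes the argument.
-/

theorem ae_eq_of_measure_preimage_singleton_eq_one {X Y : Type*} [MeasurableSpace X]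
    [MeasurableSpace Y] [MeasurableSingletonClass Y] {ρ : Measure X} [IsProbabilityMeasure ρ]
    {T : X → Y} (hT : Measurable T) {y : Y} (h : ρ (T ⁻¹' {y}) = 1) :
    ∀ᵐ x ∂ρ, T x = y :=
  (ae_iff_measure_eq (hT (measurableSet_singleton y)).nullMeasurableSet).2 <|
    h.trans measure_univ.symm

theorem ae_measure_ne_zero_of_disintegration {X Y : Type*} [MeasurableSpace X]
    [MeasurableSpace Y] [MeasurableSingletonClass Y] {μ : Measure X} {T : X → Y}
    (hT : Measurable T) {ν : Measure Y} {κ : Y → Measure X}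
    (hκprob : ∀ y, IsProbabilityMeasure (κ y))
    (hκmeas : ∀ A : Set X, MeasurableSet A → Measurable (fun y => κ y A))
    (hκdis : ∀ A : Set X, MeasurableSet A → μ A = ∫⁻ y, κ y A ∂ν)
    (hκfib : ∀ᵐ y ∂ν, κ y (T ⁻¹' {y}) = 1) {A : Set X} (hA : MeasurableSet A) :
    ∀ᵐ x ∂μ, x ∈ A → κ (T x) A ≠ 0 := by
  set C := {y | κ y A = 0}
  have hB : MeasurableSet (A ∩ T ⁻¹' C) :=
    hA.inter (hT (hκmeas A hA (measurableSet_singleton 0)))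
  suffices μ (A ∩ T ⁻¹' C) = 0 by
    filter_upwards [measure_eq_zero_iff_ae_notMem.1 this] with x hx hxA hxC
    exact hx ⟨hxA, hxC⟩
  rw [hκdis _ hB, lintegral_eq_zero_iff (hκmeas _ hB)]
  filter_upwards [hκfib] with y hy
  by_cases hyC : κ y A = 0
  · exact measure_mono_null inter_subset_left hyC
  · refine measure_eq_zero_iff_ae_notMem.2 ?_
    filter_upwards [ae_eq_of_measure_preimage_singleton_eq_one hT hy] with x hx ⟨_, hxC⟩
    exact hyC (hx ▸ hxC)

theorem ae_mem_measureSupport_of_forall_isOpen {X : Type*} [TopologicalSpace X]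
    [SecondCountableTopology X] [MeasurableSpace X] {μ : Measure X} {ρ : X → Measure X}
    (h : ∀ U : Set X, IsOpen U → ∀ᵐ x ∂μ, x ∈ U → ρ x U ≠ 0) :
    ∀ᵐ x ∂μ, x ∈ measureSupport (ρ x) := by
  obtain ⟨b, hbc, -, hb⟩ := TopologicalSpace.exists_countable_basis X
  have hbasis : ∀ᵐ x ∂μ, ∀ U ∈ b, x ∈ U → ρ x U ≠ 0 :=
    (ae_ball_iff hbc).2 fun U hU => h U (hb.isOpen hU)
  filter_upwards [hbasis] with x hx V hV hxV
  obtain ⟨U, hUb, hxU, hUV⟩ := hb.exists_subset_of_mem_open hxV hV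
  exact (pos_iff_ne_zero.2 (hx U hUb hxU)).trans_le (measure_mono hUV)

theorem stmt6_general {X Y : Type*} [TopologicalSpace X] [PolishSpace X]
    [MeasurableSpace X] [BorelSpace X]
    [MeasurableSpace Y] [StandardBorelSpace Y]
    (μ : Measure X)
    (T : X → Y) (hT : Measurable T)
    (ν : Measure Y)
    (κ : Y → Measure X) (hκprob : ∀ y, IsProbabilityMeasure (κ y))
    (hκmeas : ∀ A : Set X, MeasurableSet A → Measurable (fun y => κ y A))
    (hκdis : ∀ A : Set X, MeasurableSet A → μ A = ∫⁻ y, κ y A ∂ν)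
    (hκfib : ∀ᵐ y ∂ν, κ y (T ⁻¹' {y}) = 1) :
    ∀ᵐ x ∂μ, x ∈ measureSupport (κ (T x)) :=
  ae_mem_measureSupport_of_forall_isOpen fun _ hU =>
    ae_measure_ne_zero_of_disintegration hT hκprob hκmeas hκdis hκfib hU.measurableSet

theorem stmt6 {X Y : Type*} [TopologicalSpace X] [PolishSpace X]
    [MeasurableSpace X] [BorelSpace X]
    [MeasurableSpace Y] [StandardBorelSpace Y]
    (μ : Measure X) [IsProbabilityMeasure μ]
    (T : X → Y) (hT : Measurable T)
    (ν : Measure Y) (hν : ν = μ.map T)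
    (κ : Y → Measure X) (hκprob : ∀ y, IsProbabilityMeasure (κ y))
    (hκmeas : ∀ A : Set X, MeasurableSet A → Measurable (fun y => κ y A))
    (hκdis : ∀ A : Set X, MeasurableSet A → μ A = ∫⁻ y, κ y A ∂ν)
    (hκfib : ∀ᵐ y ∂ν, κ y (T ⁻¹' {y}) = 1) :
    ∀ᵐ x ∂μ, x ∈ measureSupport (κ (T x)) :=
  stmt6_general μ T hT ν κ hκprob hκmeas hκdis hκfib
end

section
/- Let X be a Polish space with its Borel σ-algebra, μ a Borel probability measure on X, Y a standard Borel space, T : X → Y a measurable map, ν = T_*μ, and (κ_y)_{y∈Y} a disintegration of μ over T (μ(A) = ∫_Y κ_y(A) dν(y) for all measurable A, and κ_y(T⁻¹{y}) = 1 for ν-a.e. y). Define the measure θ on X × X by θ(C) = ∫_Y (κ_y × κ_y)(C) dν(y). If μ has full support, i.e. supp(μ) = X, then the diagonal Δ_X = {(x, x) : x ∈ X} is contained in the topological support of θ. -/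
open MeasureTheory Filter Set

theorem stmt7 {X Y : Type*} [TopologicalSpace X] [PolishSpace X]
    [MeasurableSpace X] [BorelSpace X]
    [MeasurableSpace Y] [StandardBorelSpace Y]
    (μ : Measure X) [IsProbabilityMeasure μ]
    (T : X → Y) (hT : Measurable T)
    (ν : Measure Y) (hν : ν = μ.map T)
    (κ : Y → Measure X) (hκprob : ∀ y, IsProbabilityMeasure (κ y))
    (hκmeas : ∀ A : Set X, MeasurableSet A → Measurable (fun y => κ y A))
    (hκdis : ∀ A : Set X, MeasurableSet A → μ A = ∫⁻ y, κ y A ∂ν)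
    (hκfib : ∀ᵐ y ∂ν, κ y (T ⁻¹' {y}) = 1)
    -- the relatively independent self-joining of `μ` over `T`
    (θ : Measure (X × X))
    (hθ : ∀ C : Set (X × X), MeasurableSet C → θ C = ∫⁻ y, ((κ y).prod (κ y)) C ∂ν)
    -- `μ` has full support
    (hfull : measureSupport μ = Set.univ) :
    {p : X × X | p.1 = p.2} ⊆ measureSupport θ := by
  rintro ⟨x, x'⟩ (hx : x = x') U hU hxU
  subst hx
  -- find an open box V × V ⊆ U containing (x, x)
  obtain ⟨V₁, V₂, hV₁, hV₂, hx₁, hx₂, hVU⟩ :=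
    isOpen_prod_iff.mp hU x x hxU
  set V := V₁ ∩ V₂ with hV
  have hVopen : IsOpen V := hV₁.inter hV₂
  have hxV : x ∈ V := ⟨hx₁, hx₂⟩
  have hVm : MeasurableSet V := hVopen.measurableSet
  have hbox : V ×ˢ V ⊆ U := fun p hp =>
    hVU ⟨hp.1.1, hp.2.2⟩
  -- μ V > 0
  have hμV : 0 < μ V := by
    have := hfull ▸ (Set.mem_univ x)
    exact this V hVopen hxV
  -- hence ∫⁻ κ y V dν > 0
  have hint : 0 < ∫⁻ y, κ y V ∂ν := (hκdis V hVm) ▸ hμV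
  have hmeasf : Measurable (fun y => κ y V) := hκmeas V hVm
  have hsupp : 0 < ν (Function.support fun y => κ y V) :=
    (lintegral_pos_iff_support hmeasf).mp hint
  -- θ U ≥ θ (V ×ˢ V) = ∫⁻ κ y V * κ y V dν > 0
  have hθbox : θ (V ×ˢ V) = ∫⁻ y, κ y V * κ y V ∂ν := by
    rw [hθ _ (hVm.prod hVm)]
    exact lintegral_congr fun y => Measure.prod_prod V V
  have hpos : 0 < θ (V ×ˢ V) := by
    rw [hθbox]
    refine (lintegral_pos_iff_support (hmeasf.mul hmeasf)).mpr ?_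
    have : (Function.support fun y => κ y V) ⊆
        Function.support fun y => κ y V * κ y V := by
      intro y hy
      simp only [Function.mem_support] at hy ⊢
      exact mul_ne_zero hy hy
    exact lt_of_lt_of_le hsupp (measure_mono this)
  exact lt_of_lt_of_le hpos (measure_mono hbox)
end

section
/- Let (X, d) be a metric space, K ⊆ X a compact set, r > 0, and N a positive integer. Assume that for every x ∈ X, every subset of the closed ball of radius 2r centered at x whose points are pairwise at distance at least r has cardinality at most N. Then for every subset G ⊆ K there exist finite subsets F₁, …, F_N of G such that for each i the open balls {B(q, r) : q ∈ F_i} are pairwise disjoint, and G ⊆ ⋃_{i=1}^N ⋃_{q ∈ F_i} B(q, r). -/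
open Metric Set

lemma aux_color {X : Type*} [MetricSpace X] (r : ℝ) (hr : 0 < r) (N : ℕ) (hN : 0 < N)
    (hsep : ∀ (x : X) (S : Set X), S ⊆ Metric.closedBall x (2 * r) →
      (∀ a ∈ S, ∀ b ∈ S, a ≠ b → r ≤ dist a b) → S.Finite ∧ Nat.card S ≤ N) :
    ∀ s : Finset X, (∀ a ∈ s, ∀ b ∈ s, a ≠ b → r ≤ dist a b) →
      ∃ c : X → Fin N, ∀ a ∈ s, ∀ b ∈ s, a ≠ b → c a = c b → 2 * r ≤ dist a b := by
  classical
  intro s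
  induction s using Finset.induction_on with
  | empty => exact fun _ => ⟨fun _ => ⟨0, hN⟩, by simp⟩
  | @insert x t hx ih =>
    intro hsepins
    have hsept : ∀ a ∈ t, ∀ b ∈ t, a ≠ b → r ≤ dist a b := fun a ha b hb hab =>
      hsepins a (Finset.mem_insert_of_mem ha) b (Finset.mem_insert_of_mem hb) hab
    obtain ⟨c, hc⟩ := ih hsept
    set nb : Finset X := t.filter (fun y => dist x y < 2 * r) with hnb
    have hxnb : x ∉ nb := fun h => hx (Finset.mem_filter.mp h).1
    have hcard : nb.card + 1 ≤ N := by
      have hsub : (↑(insert x nb) : Set X) ⊆ Metric.closedBall x (2 * r) := by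
        intro y hy
        simp only [Finset.coe_insert, Set.mem_insert_iff, Finset.mem_coe] at hy
        rcases hy with rfl | hy
        · exact Metric.mem_closedBall_self (by linarith)
        · have := (Finset.mem_filter.mp hy).2
          simp only [Metric.mem_closedBall]
          rw [dist_comm]
          linarith
      have hsep' : ∀ a ∈ (↑(insert x nb) : Set X), ∀ b ∈ (↑(insert x nb) : Set X),
          a ≠ b → r ≤ dist a b := by
        intro a ha b hb hab
        have hmem : ∀ y, y ∈ (↑(insert x nb) : Set X) → y ∈ insert x t := by
          intro y hy
          simp only [Finset.coe_insert, Set.mem_insert_iff, Finset.mem_coe] at hy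
          rcases hy with rfl | hy
          · exact Finset.mem_insert_self _ _
          · exact Finset.mem_insert_of_mem (Finset.mem_filter.mp hy).1
        exact hsepins a (hmem a ha) b (hmem b hb) hab
      have := (hsep x _ hsub hsep').2
      rwa [Nat.card_coe_set_eq, Set.ncard_coe_finset, Finset.card_insert_of_notMem hxnb]
        at this
    have himg : (nb.image c).card < N := lt_of_le_of_lt Finset.card_image_le (by omega)
    have : ∃ i : Fin N, i ∉ nb.image c := by
      by_contra h
      push_neg at h
      have : (Finset.univ : Finset (Fin N)) ⊆ nb.image c := fun i _ => h i
      have := Finset.card_le_card this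
      simp [Finset.card_univ] at this
      omega
    obtain ⟨i, hi⟩ := this
    refine ⟨Function.update c x i, ?_⟩
    intro a ha b hb hab hcab
    have key : ∀ y ∈ t, Function.update c x i y = c y := by
      intro y hy
      exact Function.update_of_ne (by rintro rfl; exact hx hy) _ _
    rcases Finset.mem_insert.mp ha with rfl | ha'
    · rcases Finset.mem_insert.mp hb with rfl | hb'
      · exact absurd rfl hab
      · rw [Function.update_self, key b hb'] at hcab
        have : b ∉ nb := fun h => hi (hcab ▸ Finset.mem_image_of_mem c h)
        have : ¬ dist a b < 2 * r := fun h => this (Finset.mem_filter.mpr ⟨hb', h⟩)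
        linarith
    · rcases Finset.mem_insert.mp hb with rfl | hb'
      · rw [Function.update_self, key a ha'] at hcab
        have : a ∉ nb := fun h => hi (hcab ▸ Finset.mem_image_of_mem c h)
        have : ¬ dist b a < 2 * r := fun h => this (Finset.mem_filter.mpr ⟨ha', h⟩)
        rw [dist_comm]
        linarith
      · rw [key a ha', key b hb'] at hcab
        exact hc a ha' b hb' hab hcab

theorem stmt9 {X : Type*} [MetricSpace X]
    (K : Set X) (hK : IsCompact K)
    (r : ℝ) (hr : 0 < r)
    (N : ℕ) (hN : 0 < N)
    -- every `r`-separated subset of a closed ball of radius `2r` has at most `N` points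
    (hsep : ∀ (x : X) (S : Set X), S ⊆ Metric.closedBall x (2 * r) →
      (∀ a ∈ S, ∀ b ∈ S, a ≠ b → r ≤ dist a b) → S.Finite ∧ Nat.card S ≤ N) :
    ∀ G : Set X, G ⊆ K →
      ∃ F : Fin N → Finset X,
        (∀ i, ↑(F i) ⊆ G) ∧
        (∀ i, ∀ a ∈ F i, ∀ b ∈ F i, a ≠ b → Disjoint (Metric.ball a r) (Metric.ball b r)) ∧
        G ⊆ ⋃ i : Fin N, ⋃ q ∈ F i, Metric.ball q r := by
  classical
  intro G hG
  -- a uniform bound on the size of r-separated subsets of K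
  obtain ⟨T, hTfin, hTcov⟩ := totallyBounded_iff.mp hK.totallyBounded (r/2) (by linarith)
  set M := hTfin.toFinset.card with hM
  have hbound : ∀ s : Finset X, ↑s ⊆ G → (∀ a ∈ s, ∀ b ∈ s, a ≠ b → r ≤ dist a b) →
      s.card ≤ M := by
    intro s hsG hs
    have hsK : ↑s ⊆ K := hsG.trans hG
    have hex : ∀ x : X, ∃ t : X, x ∈ s → t ∈ hTfin.toFinset ∧ x ∈ ball t (r/2) := by
      intro x
      by_cases hx : x ∈ s
      · have := hTcov (hsK hx)
        simp only [Set.mem_iUnion] at this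
        obtain ⟨t, ht, hxt⟩ := this
        exact ⟨t, fun _ => ⟨hTfin.mem_toFinset.mpr ht, hxt⟩⟩
      · exact ⟨x, fun h => absurd h hx⟩
    choose f hf using hex
    apply Finset.card_le_card_of_injOn f (fun a ha => (hf a ha).1)
    intro a ha b hb hfab
    by_contra hab
    have ha' := (hf a (Finset.mem_coe.mp ha)).2
    have hb' := (hf b (Finset.mem_coe.mp hb)).2
    rw [hfab] at ha'
    have : dist a b < r := by
      have h1 : dist a (f b) < r/2 := Metric.mem_ball.mp ha'
      have h2 : dist b (f b) < r/2 := Metric.mem_ball.mp hb'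
      calc dist a b ≤ dist a (f b) + dist (f b) b := dist_triangle _ _ _
        _ = dist a (f b) + dist b (f b) := by rw [dist_comm (f b) b]
        _ < r := by linarith
    have := hs a ha b hb hab
    linarith
  -- choose a maximum-cardinality r-separated subset of G
  set A : Set ℕ := {n | ∃ s : Finset X, ↑s ⊆ G ∧ (∀ a ∈ s, ∀ b ∈ s, a ≠ b → r ≤ dist a b)
    ∧ s.card = n} with hA
  have hA0 : 0 ∈ A := ⟨∅, by simp, by simp, by simp⟩
  have hAbdd : ∀ n ∈ A, n ≤ M := by
    rintro n ⟨s, h1, h2, h3⟩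
    exact h3 ▸ hbound s h1 h2
  have hmem : sSup A ∈ A := Nat.sSup_mem ⟨0, hA0⟩ ⟨M, hAbdd⟩
  obtain ⟨S, hSG, hSsep, hScard⟩ := hmem
  -- maximality: every point of G is within r of some point of S
  have hmax : ∀ g ∈ G, ∃ s ∈ S, dist g s < r := by
    intro g hg
    by_contra h
    push_neg at h
    have hgS : g ∉ S := fun hgS => by
      have := h g hgS
      simp at this
      linarith
    have hsep' : ∀ a ∈ insert g S, ∀ b ∈ insert g S, a ≠ b → r ≤ dist a b := by
      intro a ha b hb hab
      rcases Finset.mem_insert.mp ha with rfl | ha'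
      · rcases Finset.mem_insert.mp hb with rfl | hb'
        · exact absurd rfl hab
        · exact h b hb'
      · rcases Finset.mem_insert.mp hb with rfl | hb'
        · rw [dist_comm]; exact h a ha'
        · exact hSsep a ha' b hb' hab
    have hsubG : ↑(insert g S) ⊆ G := by
      intro y hy
      simp only [Finset.coe_insert, Set.mem_insert_iff, Finset.mem_coe] at hy
      rcases hy with rfl | hy
      · exact hg
      · exact hSG hy
    have hcard : (insert g S).card = S.card + 1 := Finset.card_insert_of_notMem hgS
    have hmemA : S.card + 1 ∈ A := ⟨insert g S, hsubG, hsep', hcard⟩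
    have : S.card + 1 ≤ sSup A := le_csSup ⟨M, fun n hn => hAbdd n hn⟩ hmemA
    omega
  -- color S with N colors
  obtain ⟨c, hc⟩ := aux_color r hr N hN hsep S hSsep
  refine ⟨fun i => S.filter (fun q => c q = i), ?_, ?_, ?_⟩
  · intro i q hq
    exact hSG (Finset.mem_coe.mpr (Finset.mem_filter.mp (Finset.mem_coe.mp hq)).1)
  · intro i a ha b hb hab
    obtain ⟨haS, hai⟩ := Finset.mem_filter.mp ha
    obtain ⟨hbS, hbi⟩ := Finset.mem_filter.mp hb
    have := hc a haS b hbS hab (hai.trans hbi.symm)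
    exact Metric.ball_disjoint_ball (by linarith)
  · intro g hg
    obtain ⟨s, hsS, hds⟩ := hmax g hg
    simp only [Set.mem_iUnion]
    exact ⟨c s, s, Finset.mem_filter.mpr ⟨hsS, rfl⟩, Metric.mem_ball.mpr hds⟩
end
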